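/- Let U be a 6-dimensional F_p-vector space (p an odd prime) with basis u₁,...,u₆, and let w = u₁∧u₂∧u₃ + u₃∧u₄∧u₅ + u₅∧u₆∧u₁ ∈ Λ³U. Define X_w = { x ∈ Λ²U* : ⟨⟨w, x∧y⟩⟩ = 0 for all y ∈ U* }. Then X_w = span{ u₁*∧u₂* − u₄*∧u₅*, u₂*∧u₃* − u₅*∧u₆*, u₁*∧u₄*, u₂*∧u₅*, u₃*∧u₆*, u₄*∧u₆*, u₃*∧u₄* + u₁*∧u₆*, u₂*∧u₄*, u₂*∧u₆* }; in particular dim X_w = 9. -/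

import Mathlib

open ExteriorAlgebra

/-- The standard pairing of a `d`-tuple of dual vectors against the exterior algebra:
on the degree-`d` component it is `w ↦ ⟨⟨w, f₁ ∧ ⋯ ∧ f_d⟩⟩ = det (fᵢ(uⱼ))`, and it
vanishes on the other graded components. -/
noncomputable def pairDual (F U : Type*) [Field F] [AddCommGroup U] [Module F U]
    (d : ℕ) (f : Fin d → Module.Dual F U) : ExteriorAlgebra F U →ₗ[F] F :=
  ExteriorAlgebra.liftAlternating
    (Pi.single d (Matrix.detRowAlternating.compLinearMap (LinearMap.pi f)))

/-- `pairDual` as an alternating map in the dual vectors. -/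
noncomputable def pairAlt (F U : Type*) [Field F] [AddCommGroup U] [Module F U] (d : ℕ) :
    (Module.Dual F U) [⋀^Fin d]→ₗ[F] (ExteriorAlgebra F U →ₗ[F] F) where
  toFun f := pairDual F U d f
  map_update_add' := by
    intro inst f i x y
    have hI : inst = instDecidableEqFin d := Subsingleton.elim _ _
    subst hI
    have hm : ∀ (z : Module.Dual F U) (v : Fin d → U),
        (Matrix.of fun j i' => (Function.update f i z) i' (v j)) =
          (Matrix.of fun j i' => f i' (v j)).updateCol i (fun j => z (v j)) := by
      intro z v
      ext j i'
      by_cases h : i' = i <;> simp [Matrix.updateCol_apply, Function.update, h]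
    have key : Matrix.detRowAlternating.compLinearMap
          (LinearMap.pi (Function.update f i (x + y)))
        = Matrix.detRowAlternating.compLinearMap (LinearMap.pi (Function.update f i x))
          + Matrix.detRowAlternating.compLinearMap (LinearMap.pi (Function.update f i y)) := by
      ext v
      simp only [AlternatingMap.compLinearMap_apply, AlternatingMap.add_apply]
      show (Matrix.of fun j i' => (Function.update f i (x + y)) i' (v j)).det
        = (Matrix.of fun j i' => (Function.update f i x) i' (v j)).det
          + (Matrix.of fun j i' => (Function.update f i y) i' (v j)).det
      rw [hm, hm, hm]
      exact Matrix.det_updateCol_add _ _ _ _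
    show pairDual F U d _ = pairDual F U d _ + pairDual F U d _
    unfold pairDual
    rw [key, Pi.single_add, map_add]
  map_update_smul' := by
    intro inst f i c x
    have hI : inst = instDecidableEqFin d := Subsingleton.elim _ _
    subst hI
    have hm : ∀ (z : Module.Dual F U) (v : Fin d → U),
        (Matrix.of fun j i' => (Function.update f i z) i' (v j)) =
          (Matrix.of fun j i' => f i' (v j)).updateCol i (fun j => z (v j)) := by
      intro z v
      ext j i'
      by_cases h : i' = i <;> simp [Matrix.updateCol_apply, Function.update, h]
    have key : Matrix.detRowAlternating.compLinearMap
          (LinearMap.pi (Function.update f i (c • x)))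
        = c • Matrix.detRowAlternating.compLinearMap (LinearMap.pi (Function.update f i x)) := by
      ext v
      simp only [AlternatingMap.compLinearMap_apply, AlternatingMap.smul_apply]
      show (Matrix.of fun j i' => (Function.update f i (c • x)) i' (v j)).det
        = c • (Matrix.of fun j i' => (Function.update f i x) i' (v j)).det
      rw [hm, hm]
      exact Matrix.det_updateCol_smul _ _ _ _
    show pairDual F U d _ = c • pairDual F U d _
    unfold pairDual
    rw [key, Pi.single_smul, map_smul]
  map_eq_zero_of_eq' := by
    intro f i j hf hij
    have key : Matrix.detRowAlternating.compLinearMap (LinearMap.pi f)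
        = (0 : U [⋀^Fin d]→ₗ[F] F) := by
      ext v
      simp only [AlternatingMap.compLinearMap_apply, AlternatingMap.zero_apply]
      show (Matrix.of fun k i' => f i' (v k)).det = 0
      exact Matrix.det_zero_of_column_eq hij
        (fun k => by rw [Matrix.of_apply, Matrix.of_apply, hf])
    show pairDual F U d f = 0
    unfold pairDual
    rw [key, Pi.single_zero, map_zero]

/-- The standard pairing `Λ U* × Λ U → F` (graded pieces of equal degree pair by the
determinant formula, distinct degrees pair to zero), as a linear map
`Λ U* →ₗ (Λ U →ₗ F)`. -/
noncomputable def pairing (F U : Type*) [Field F] [AddCommGroup U] [Module F U] :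
    ExteriorAlgebra F (Module.Dual F U) →ₗ[F] (ExteriorAlgebra F U →ₗ[F] F) :=
  ExteriorAlgebra.liftAlternating fun d => pairAlt F U d

/-
The map `x ↦ ⟨⟨w, x ∧ y⟩⟩` is linear in `x`, so `X_w` is a subspace of `Λ²U*`. Writing
`x = ∑_{i<j} β_{ij} uᵢ* ∧ uⱼ*`, the pairing of `x ∧ uₖ*` with each of the three triangles
`uₐ ∧ u_b ∧ u_c` of `w` contributes `β_{ab} δ_{ck} - β_{ac} δ_{bk} + β_{bc} δ_{ak}`; for
`k = 1, …, 6` this gives six independent linear equations, whose solutions are exactly the span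
of the nine listed bivectors. These are independent because each of them is the only one with a
nonzero pairing against a suitable `uᵢ ∧ uⱼ`.
-/

namespace ExteriorAlgebra

variable {R M I : Type*} [CommRing R] [AddCommGroup M] [Module R M]

theorem ι_mul_ι_eq_ιMulti (a b : M) : ι R a * ι R b = ιMulti R 2 ![a, b] := by
  simp [ιMulti_apply]

theorem ι_mul_ι_mul_ι_eq_ιMulti (a b c : M) :
    ι R a * ι R b * ι R c = ιMulti R 3 ![a, b, c] := by
  simp [ιMulti_apply, mul_assoc]

theorem ι_mul_ι_mem_exteriorPower_two (a b : M) : ι R a * ι R b ∈ ⋀[R]^2 M := by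
  rw [ι_mul_ι_eq_ιMulti]
  exact ιMulti_range R 2 ⟨_, rfl⟩

open Submodule in
theorem exteriorPower_two_eq_span (b : Module.Basis I R M) :
    ⋀[R]^2 M = span R (Set.range fun t : I × I => ι R (b t.1) * ι R (b t.2)) := by
  rw [exteriorPower, pow_two, LinearMap.range_eq_map, ← b.span_eq, map_span, span_mul_span]
  congr 1
  ext x
  simp [Set.mem_mul]

theorem sum_smul_ι_mul_ι_eq_sum_lt [Fintype I] [LinearOrder I] (v : I → M) (α : I × I → R) :
    ∑ t, α t • (ι R (v t.1) * ι R (v t.2)) =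
      ∑ t, (if t.1 < t.2 then α t - α t.swap else 0) • (ι R (v t.1) * ι R (v t.2)) := by
  set E : I × I → ExteriorAlgebra R M := fun t => ι R (v t.1) * ι R (v t.2)
  have hsplit : ∀ t, α t • E t =
      (if t.1 < t.2 then α t else 0) • E t + (if t.2 < t.1 then α t else 0) • E t := by
    intro t
    rcases lt_trichotomy t.1 t.2 with h | h | h
    · simp [h, h.not_gt]
    · simp [E, h]
    · simp [h, h.not_gt]
  rw [Finset.sum_congr rfl fun t _ => hsplit t, Finset.sum_add_distrib,
    ← (Equiv.prodComm I I).sum_comp (fun t => (if t.2 < t.1 then α t else 0) • E t),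
    ← Finset.sum_add_distrib]
  refine Finset.sum_congr rfl fun t _ => ?_
  have hswap : E t.swap = -E t := eq_neg_of_add_eq_zero_left (ι_add_mul_swap _ _)
  simp only [Equiv.prodComm_apply, Prod.fst_swap, Prod.snd_swap, hswap]
  by_cases h : t.1 < t.2 <;> simp only [E, h, if_true, if_false] <;> module

end ExteriorAlgebra

section Pairing

variable {F U : Type*} [Field F] [AddCommGroup U] [Module F U]

theorem pairing_ιMulti_ιMulti {d : ℕ} (g : Fin d → Module.Dual F U) (v : Fin d → U) :
    pairing F U (ιMulti F d g) (ιMulti F d v) = (Matrix.of fun j i => g i (v j)).det := by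
  simp [pairing, pairAlt, pairDual, Matrix.detRowAlternating]
  rfl

theorem pairing_ι_mul_ι (g₀ g₁ : Module.Dual F U) (v₀ v₁ : U) :
    pairing F U (ι F g₀ * ι F g₁) (ι F v₀ * ι F v₁) = g₀ v₀ * g₁ v₁ - g₁ v₀ * g₀ v₁ := by
  rw [ι_mul_ι_eq_ιMulti, ι_mul_ι_eq_ιMulti, pairing_ιMulti_ιMulti, Matrix.det_fin_two]
  simp

theorem pairing_ι_mul_ι_mul_ι (g₀ g₁ g₂ : Module.Dual F U) (v₀ v₁ v₂ : U) :
    pairing F U (ι F g₀ * ι F g₁ * ι F g₂) (ι F v₀ * ι F v₁ * ι F v₂)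
      = g₀ v₀ * g₁ v₁ * g₂ v₂ - g₀ v₀ * g₂ v₁ * g₁ v₂ - g₁ v₀ * g₀ v₁ * g₂ v₂
        + g₁ v₀ * g₂ v₁ * g₀ v₂ + g₂ v₀ * g₀ v₁ * g₁ v₂ - g₂ v₀ * g₁ v₁ * g₀ v₂ := by
  rw [ι_mul_ι_mul_ι_eq_ιMulti, ι_mul_ι_mul_ι_eq_ιMulti, pairing_ιMulti_ιMulti,
    Matrix.det_fin_three]
  simp

end Pairing

section Hexagon

variable {F U : Type*} [Field F] [AddCommGroup U] [Module F U]

noncomputable def wedgeAnnihilator (w : ExteriorAlgebra F U) :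
    Submodule F (ExteriorAlgebra F (Module.Dual F U)) :=
  ⋀[F]^2 (Module.Dual F U) ⊓
    ⨅ y, LinearMap.ker ((pairing F U).flip w ∘ₗ LinearMap.mulRight F (ι F y))

theorem mem_wedgeAnnihilator {w : ExteriorAlgebra F U}
    {x : ExteriorAlgebra F (Module.Dual F U)} :
    x ∈ wedgeAnnihilator w ↔
      x ∈ ⋀[F]^2 (Module.Dual F U) ∧ ∀ y, pairing F U (x * ι F y) w = 0 := by
  simp [wedgeAnnihilator]

variable (u : Module.Basis (Fin 6) F U)

noncomputable def hexagonTrivector : ExteriorAlgebra F U :=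
  ι F (u 0) * ι F (u 1) * ι F (u 2) + ι F (u 2) * ι F (u 3) * ι F (u 4) +
    ι F (u 4) * ι F (u 5) * ι F (u 0)

noncomputable def hexagonAnnihilatorGens : Fin 9 → ExteriorAlgebra F (Module.Dual F U) :=
  let e i := ι F (u.coord i)
  ![e 0 * e 1 - e 3 * e 4, e 1 * e 2 - e 4 * e 5, e 0 * e 3, e 1 * e 4, e 2 * e 5, e 3 * e 5,
    e 2 * e 3 + e 0 * e 5, e 1 * e 3, e 1 * e 5]

theorem hexagonAnnihilatorGens_mem (m : Fin 9) :
    hexagonAnnihilatorGens u m ∈ wedgeAnnihilator (hexagonTrivector u) := by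
  rw [mem_wedgeAnnihilator]
  constructor
  · fin_cases m <;> simp only [hexagonAnnihilatorGens] <;>
      apply_rules [Submodule.sub_mem, Submodule.add_mem, ι_mul_ι_mem_exteriorPower_two]
  · intro y
    fin_cases m <;>
      simp [hexagonAnnihilatorGens, hexagonTrivector, sub_mul, add_mul, pairing_ι_mul_ι_mul_ι,
        Module.Basis.coord_apply]

open Submodule in
theorem wedgeAnnihilator_hexagonTrivector_le :
    wedgeAnnihilator (hexagonTrivector u) ≤ span F (Set.range (hexagonAnnihilatorGens u)) := by
  intro x hx
  rw [mem_wedgeAnnihilator, exteriorPower_two_eq_span u.dualBasis, Module.Basis.coe_dualBasis,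
    mem_span_range_iff_exists_fun] at hx
  obtain ⟨⟨α, rfl⟩, hcond⟩ := hx
  rw [sum_smul_ι_mul_ι_eq_sum_lt] at hcond ⊢
  let β : Fin 6 → Fin 6 → F := fun i j => α (i, j) - α (j, i)
  have hβ : β 1 2 + β 4 5 = 0 ∧ β 0 2 = 0 ∧ β 0 1 + β 3 4 = 0 ∧ β 2 4 = 0 ∧ β 2 3 = β 0 5 ∧
      β 0 4 = 0 := by
    have h : ∀ k, _ := fun k => hcond (u.coord k)
    simp only [Fintype.sum_prod_type, Fin.sum_univ_six, hexagonTrivector, add_mul, map_add,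
      smul_mul_assoc, map_smul, LinearMap.add_apply, LinearMap.smul_apply,
      pairing_ι_mul_ι_mul_ι] at h
    simp [Module.Basis.coord_apply, Fin.forall_fin_succ] at h
    grind
  clear hcond
  refine (mem_span_range_iff_exists_fun F).2
    ⟨![β 0 1, β 1 2, β 0 3, β 1 4, β 2 5, β 3 5, β 2 3, β 1 3, β 1 5], ?_⟩
  simp [Fin.sum_univ_succ, Fintype.sum_prod_type, hexagonAnnihilatorGens]
  match_scalars <;> grind

theorem wedgeAnnihilator_hexagonTrivector :
    wedgeAnnihilator (hexagonTrivector u) =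
      Submodule.span F (Set.range (hexagonAnnihilatorGens u)) :=
  le_antisymm (wedgeAnnihilator_hexagonTrivector_le u)
    (Submodule.span_le.2 (Set.range_subset_iff.2 (hexagonAnnihilatorGens_mem u)))

theorem linearIndependent_hexagonAnnihilatorGens :
    LinearIndependent F (hexagonAnnihilatorGens u) := by
  let e i := ι F (u i)
  let E : Fin 9 → ExteriorAlgebra F U :=
    ![e 0 * e 1, e 1 * e 2, e 0 * e 3, e 1 * e 4, e 2 * e 5, e 3 * e 5, e 2 * e 3, e 1 * e 3,
      e 1 * e 5]
  rw [Fintype.linearIndependent_iff]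
  intro c hc
  have h : ∀ n, pairing F U (∑ m, c m • hexagonAnnihilatorGens u m) (E n) = 0 := by simp [hc]
  simp [Fin.forall_fin_succ, Fin.sum_univ_succ, E, e, hexagonAnnihilatorGens,
    pairing_ι_mul_ι] at h
  simpa [Fin.forall_fin_succ] using h

theorem finrank_wedgeAnnihilator_hexagonTrivector :
    Module.finrank F (wedgeAnnihilator (hexagonTrivector u)) = 9 := by
  rw [wedgeAnnihilator_hexagonTrivector,
    finrank_span_eq_card (linearIndependent_hexagonAnnihilatorGens u), Fintype.card_fin]

end Hexagon

set_option synthInstance.maxHeartbeats 1000000 in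
theorem stmt_18_general (p : ℕ) [Fact p.Prime]
    (U : Type*) [AddCommGroup U] [Module (ZMod p) U] (u : Module.Basis (Fin 6) (ZMod p) U) :
    let F := ZMod p
    let e : Fin 6 → ExteriorAlgebra F U := fun i => ι F (u i)
    let w := e 0 * e 1 * e 2 + e 2 * e 3 * e 4 + e 4 * e 5 * e 0
    let ι' : Module.Dual F U → ExteriorAlgebra F (Module.Dual F U) := ι F
    let Xw : Set (ExteriorAlgebra F (Module.Dual F U)) :=
      {x | x ∈ ⋀[F]^2 (Module.Dual F U) ∧
        ∀ y : Module.Dual F U, pairing F U (x * ι' y) w = 0}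
    let B : Submodule F (ExteriorAlgebra F (Module.Dual F U)) :=
      Submodule.span F
        {ι' (u.coord 0) * ι' (u.coord 1) - ι' (u.coord 3) * ι' (u.coord 4),
         ι' (u.coord 1) * ι' (u.coord 2) - ι' (u.coord 4) * ι' (u.coord 5),
         ι' (u.coord 0) * ι' (u.coord 3),
         ι' (u.coord 1) * ι' (u.coord 4),
         ι' (u.coord 2) * ι' (u.coord 5),
         ι' (u.coord 3) * ι' (u.coord 5),
         ι' (u.coord 2) * ι' (u.coord 3) + ι' (u.coord 0) * ι' (u.coord 5),
         ι' (u.coord 1) * ι' (u.coord 3),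
         ι' (u.coord 1) * ι' (u.coord 5)}
    Xw = ↑B ∧ Module.finrank F B = 9 := by
  intro F e w ι' Xw B
  have hX : Xw = wedgeAnnihilator (hexagonTrivector u) := by
    ext x
    exact mem_wedgeAnnihilator.symm
  have hB : B = wedgeAnnihilator (hexagonTrivector u) := by
    rw [wedgeAnnihilator_hexagonTrivector]
    simp only [B, hexagonAnnihilatorGens, Matrix.range_cons, Matrix.range_empty,
      Set.singleton_union, Set.union_empty]
    rfl
  rw [hX, hB]
  exact ⟨rfl, finrank_wedgeAnnihilator_hexagonTrivector u⟩

set_option synthInstance.maxHeartbeats 1000000 in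
/-- Let `U` be a 6-dimensional `F_p`-vector space (`p` odd) and
`w = u₁∧u₂∧u₃ + u₃∧u₄∧u₅ + u₅∧u₆∧u₁ ∈ Λ³U`.  With
`X_w = { x ∈ Λ²U* : ⟨⟨w, x∧y⟩⟩ = 0 for all y ∈ U* }`, we have
`X_w = span{u₁*∧u₂* − u₄*∧u₅*, u₂*∧u₃* − u₅*∧u₆*, u₁*∧u₄*, u₂*∧u₅*, u₃*∧u₆*, u₄*∧u₆*,
u₃*∧u₄* + u₁*∧u₆*, u₂*∧u₄*, u₂*∧u₆*}`; in particular `dim X_w = 9`. -/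
theorem stmt_18 (p : ℕ) [Fact p.Prime] (hp2 : p ≠ 2)
    (U : Type*) [AddCommGroup U] [Module (ZMod p) U] (u : Module.Basis (Fin 6) (ZMod p) U) :
    let F := ZMod p
    let e : Fin 6 → ExteriorAlgebra F U := fun i => ι F (u i)
    let w := e 0 * e 1 * e 2 + e 2 * e 3 * e 4 + e 4 * e 5 * e 0
    let ι' : Module.Dual F U → ExteriorAlgebra F (Module.Dual F U) := ι F
    let Xw : Set (ExteriorAlgebra F (Module.Dual F U)) :=
      {x | x ∈ ⋀[F]^2 (Module.Dual F U) ∧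
        ∀ y : Module.Dual F U, pairing F U (x * ι' y) w = 0}
    let B : Submodule F (ExteriorAlgebra F (Module.Dual F U)) :=
      Submodule.span F
        {ι' (u.coord 0) * ι' (u.coord 1) - ι' (u.coord 3) * ι' (u.coord 4),
         ι' (u.coord 1) * ι' (u.coord 2) - ι' (u.coord 4) * ι' (u.coord 5),
         ι' (u.coord 0) * ι' (u.coord 3),
         ι' (u.coord 1) * ι' (u.coord 4),
         ι' (u.coord 2) * ι' (u.coord 5),
         ι' (u.coord 3) * ι' (u.coord 5),
         ι' (u.coord 2) * ι' (u.coord 3) + ι' (u.coord 0) * ι' (u.coord 5),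
         ι' (u.coord 1) * ι' (u.coord 3),
         ι' (u.coord 1) * ι' (u.coord 5)}
    Xw = ↑B ∧ Module.finrank F B = 9 :=
  stmt_18_general p U u
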